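/- Let d ≥ 2, let f : ℝ^d → ℝ be any function and let M ⊆ ℝ^d be any set. Let A be the set of all points x ∈ M for which there exist u ∈ S^{d−1} and δ, r > 0 such that f is Lipschitz at x relative to M ∩ C(x,u,δ,r) but f is not Lipschitz at x relative to M, where C(x,u,δ,r) is the open circular sector with vertex x, axis u, opening parameter δ and radius r. Then A is σ-porous. -/
import Mathlib


open Metric MeasureTheory Filter Set

noncomputable section

variable {d : ℕ}

/-- `f` is Lipschitz at `x` relative to `M`: either `x` is not a limit point of `M`, or
`limsup_{y→x, y∈M} |f(y)−f(x)|/‖y−x‖ < ∞`. -/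
def LipAtRel (f : EuclideanSpace ℝ (Fin d) → ℝ) (x : EuclideanSpace ℝ (Fin d))
    (M : Set (EuclideanSpace ℝ (Fin d))) : Prop :=
  x ∉ closure (M \ {x}) ∨
  Filter.IsBoundedUnder (· ≤ ·) (nhdsWithin x (M \ {x}))
    (fun y : EuclideanSpace ℝ (Fin d) => |f y - f x| / ‖y - x‖)

/-- The open circular sector with vertex `x`, axis `u`, opening parameter `δ` and radius `r`. -/
def Sector (x u : EuclideanSpace ℝ (Fin d)) (δ r : ℝ) : Set (EuclideanSpace ℝ (Fin d)) :=
  {y | y ≠ x ∧ ‖‖y - x‖⁻¹ • (y - x) - u‖ < δ} ∩ Metric.ball x r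

/-- `A` is porous at `x`. -/
def IsPorousAt (A : Set (EuclideanSpace ℝ (Fin d))) (x : EuclideanSpace ℝ (Fin d)) : Prop :=
  ∃ p : ℝ, 0 < p ∧ p < 1 ∧ ∀ ε > 0, ∃ y : EuclideanSpace ℝ (Fin d),
    y ∈ Metric.ball x ε ∧ y ≠ x ∧ Metric.ball y (p * ‖x - y‖) ∩ A = ∅

/-- `A` is porous: porous at each of its points. -/
def IsPorousSet (A : Set (EuclideanSpace ℝ (Fin d))) : Prop := ∀ x ∈ A, IsPorousAt A x

/-- `A` is σ-porous: a countable union of porous sets. -/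
def IsSigmaPorous (A : Set (EuclideanSpace ℝ (Fin d))) : Prop :=
  ∃ s : ℕ → Set (EuclideanSpace ℝ (Fin d)), (∀ n, IsPorousSet (s n)) ∧ A = ⋃ n, s n

lemma dir_lemma {E : Type*} [NormedAddCommGroup E] [NormedSpace ℝ E]
    (u v : E) (t η : ℝ) (hu : ‖u‖ = 1) (hη : 0 ≤ η) (hηt : 2*η < t)
    (hv : ‖v - t • u‖ ≤ η) : ‖‖v‖⁻¹ • v - u‖ ≤ 2*η/(t - η) := by
  have ht : 0 < t := by linarith
  have htu : ‖t • u‖ = t := by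
    rw [norm_smul, hu, Real.norm_eq_abs, abs_of_pos ht, mul_one]
  have hvt : |‖v‖ - t| ≤ η := by
    calc |‖v‖ - t| = |‖v‖ - ‖t • u‖| := by rw [htu]
    _ ≤ ‖v - t • u‖ := abs_norm_sub_norm_le _ _
    _ ≤ η := hv
  have hvlb : t - η ≤ ‖v‖ := by
    have := abs_le.1 hvt
    linarith [this.1]
  have hv0 : (0:ℝ) < ‖v‖ := by linarith
  have key : ‖v‖⁻¹ • v - u = ‖v‖⁻¹ • (v - ‖v‖ • u) := by
    rw [smul_sub, smul_smul, inv_mul_cancel₀ (ne_of_gt hv0), one_smul]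
  rw [key, norm_smul, Real.norm_eq_abs, abs_of_pos (inv_pos.2 hv0)]
  have hnum : ‖v - ‖v‖ • u‖ ≤ 2*η := by
    calc ‖v - ‖v‖ • u‖ ≤ ‖v - t • u‖ + ‖t • u - ‖v‖ • u‖ :=
          norm_sub_le_norm_sub_add_norm_sub v (t • u) (‖v‖ • u)
    _ ≤ η + ‖(t - ‖v‖) • u‖ := by rw [← sub_smul]; linarith
    _ = η + |t - ‖v‖| := by rw [norm_smul, hu, Real.norm_eq_abs, mul_one]
    _ ≤ η + η := by rw [abs_sub_comm]; linarith
    _ = 2*η := by ring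
  calc ‖v‖⁻¹ * ‖v - ‖v‖ • u‖ = ‖v - ‖v‖ • u‖ / ‖v‖ := by ring
  _ ≤ (2*η) / (t - η) := div_le_div₀ (by linarith) hnum (by linarith) hvlb

def Piece (f : EuclideanSpace ℝ (Fin d) → ℝ) (M : Set (EuclideanSpace ℝ (Fin d)))
    (u : EuclideanSpace ℝ (Fin d)) (δ r : ℝ) (K : ℕ) : Set (EuclideanSpace ℝ (Fin d)) :=
  {x | x ∈ M ∧ ¬ LipAtRel f x M ∧
    ∀ y ∈ M, y ∈ Sector x u δ r → |f y - f x| ≤ K * ‖y - x‖}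

set_option maxHeartbeats 1000000 in
lemma piece_porous (f : EuclideanSpace ℝ (Fin d) → ℝ) (M : Set (EuclideanSpace ℝ (Fin d)))
    (u : EuclideanSpace ℝ (Fin d)) (δ r : ℝ) (K : ℕ)
    (hu : ‖u‖ = 1) (hδ0 : 0 < δ) (hδ1 : δ ≤ 1) (hr : 0 < r) :
    IsPorousSet (Piece f M u δ r K) := by
  intro x hx
  obtain ⟨hxM, hnl, hKx⟩ := hx
  refine ⟨δ/24, by linarith, by linarith, ?_⟩
  intro ε hε
  rw [LipAtRel] at hnl
  push_neg at hnl
  obtain ⟨-, hub⟩ := hnl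
  set L : ℝ := 27*K/δ + 1 with hL
  have hub' : ∃ᶠ y in nhdsWithin x (M \ {x}), ¬ (|f y - f x| / ‖y - x‖ ≤ L) := by
    rw [Filter.not_eventually.symm]
    intro h
    exact hub ⟨L, Filter.eventually_map.2 h⟩
  have hε' : (0:ℝ) < min (ε*δ/13) (δ*r/15) := by
    apply lt_min <;> positivity
  set ε' : ℝ := min (ε*δ/13) (δ*r/15) with hε'def
  have hball : ∀ᶠ y in nhdsWithin x (M \ {x}), dist y x < ε' := by
    have h1 : Metric.ball x ε' ∈ nhdsWithin x (M \ {x}) :=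
      nhdsWithin_le_nhds (Metric.ball_mem_nhds x hε')
    exact h1
  obtain ⟨z, hzq, hzM, hzd⟩ :=
    (hub'.and_eventually (eventually_mem_nhdsWithin.and hball)).exists
  have hzMx : z ∈ M := hzM.1
  have hzx : z ≠ x := hzM.2
  set R : ℝ := ‖z - x‖ with hRdef
  have hR : 0 < R := norm_pos_iff.2 (sub_ne_zero.2 hzx)
  have hRd : R < ε' := by rw [dist_eq_norm] at hzd; exact hzd
  have hR13 : R < ε*δ/13 := lt_of_lt_of_le hRd (min_le_left _ _)
  have hR15 : R < δ*r/15 := lt_of_lt_of_le hRd (min_le_right _ _)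
  have hqz : L * R < |f z - f x| := by
    have h := lt_of_not_ge hzq
    rwa [lt_div_iff₀ hR] at h
  set t : ℝ := 12*R/δ with htdef
  have htpos : 0 < t := by positivity
  have htδ : t*δ = 12*R := by
    rw [htdef, div_mul_cancel₀ _ (ne_of_gt hδ0)]
  have htR : 12*R ≤ t := by
    rw [htdef, le_div_iff₀ hδ0]; nlinarith
  have hu0 : u ≠ 0 := by intro h; rw [h, norm_zero] at hu; norm_num at hu
  have hxy : ‖x - (x - t • u)‖ = t := by
    have h1 : x - (x - t • u) = t • u := by abel
    rw [h1, norm_smul, hu, Real.norm_eq_abs, abs_of_pos htpos, mul_one]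
  refine ⟨x - t • u, ?_, ?_, ?_⟩
  · rw [mem_ball, dist_eq_norm]
    have h1 : x - t • u - x = -(t • u) := by abel
    rw [h1, norm_neg, norm_smul, hu, Real.norm_eq_abs, abs_of_pos htpos, mul_one,
      htdef, div_lt_iff₀ hδ0]
    nlinarith
  · intro h
    exact smul_ne_zero (ne_of_gt htpos) hu0 (by rwa [sub_eq_self] at h)
  · rw [hxy]
    have hrad : δ/24 * t = R/2 := by linear_combination (1/24)*htδ
    rw [hrad, Set.eq_empty_iff_forall_notMem]
    rintro x' ⟨hx'b, hx'M, -, hx'K⟩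
    rw [mem_ball, dist_eq_norm] at hx'b
    have he : ‖(x - x') - t • u‖ < R/2 := by
      have h1 : (x - x') - t • u = -(x' - (x - t • u)) := by abel
      rwa [h1, norm_neg]
    have he2 : ‖(z - x') - t • u‖ ≤ 3*R/2 := by
      have h1 : (z - x') - t • u = (z - x) + ((x - x') - t • u) := by abel
      calc ‖(z - x') - t • u‖ = ‖(z - x) + ((x - x') - t • u)‖ := by rw [h1]
      _ ≤ ‖z - x‖ + ‖(x - x') - t • u‖ := norm_add_le _ _
      _ ≤ 3*R/2 := by rw [← hRdef]; linarith
    -- direction bounds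
    have hd1 : ‖‖x - x'‖⁻¹ • (x - x') - u‖ ≤ 2*(R/2)/(t - R/2) :=
      dir_lemma u (x - x') t (R/2) hu (by linarith) (by linarith) (le_of_lt he)
    have hδt : δ * (t - R/2) = 12*R - δ*R/2 := by linear_combination htδ
    have hδR1 : δ*(R/2) ≤ R/2 := by nlinarith
    have hδR3 : δ*(3*R/2) ≤ 3*R/2 := by nlinarith
    have hd1' : 2*(R/2)/(t - R/2) < δ := by
      rw [div_lt_iff₀ (by linarith)]
      linarith
    have hd2 : ‖‖z - x'‖⁻¹ • (z - x') - u‖ ≤ 2*(3*R/2)/(t - 3*R/2) :=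
      dir_lemma u (z - x') t (3*R/2) hu (by linarith) (by linarith) he2
    have hδt2 : δ * (t - 3*R/2) = 12*R - δ*(3*R/2) := by linear_combination htδ
    have hd2' : 2*(3*R/2)/(t - 3*R/2) < δ := by
      rw [div_lt_iff₀ (by linarith)]
      linarith
    -- norm bounds
    have htuu : ‖t • u‖ = t := by
      rw [norm_smul, hu, Real.norm_eq_abs, abs_of_pos htpos, mul_one]
    have hn1 : ‖x - x'‖ ≤ t + R/2 := by
      calc ‖x - x'‖ = ‖((x - x') - t • u) + t • u‖ := by rw [sub_add_cancel]
      _ ≤ ‖(x - x') - t • u‖ + ‖t • u‖ := norm_add_le _ _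
      _ ≤ t + R/2 := by rw [htuu]; linarith
    have hn2 : ‖z - x'‖ ≤ t + 3*R/2 := by
      calc ‖z - x'‖ = ‖((z - x') - t • u) + t • u‖ := by rw [sub_add_cancel]
      _ ≤ ‖(z - x') - t • u‖ + ‖t • u‖ := norm_add_le _ _
      _ ≤ t + 3*R/2 := by rw [htuu]; linarith
    have htr : t < 12*r/15 := by
      rw [htdef, div_lt_iff₀ hδ0]; nlinarith
    have hRr : R < r/15 := by nlinarith
    have hn1r : ‖x - x'‖ < r := by linarith
    have hn2r : ‖z - x'‖ < r := by linarith
    have hn1K : ‖x - x'‖ ≤ 13*R/δ := by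
      rw [le_div_iff₀ hδ0]
      nlinarith
    have hn2K : ‖z - x'‖ ≤ 14*R/δ := by
      rw [le_div_iff₀ hδ0]
      nlinarith
    -- lower bounds, nonzero
    have hlb1 : t - R/2 ≤ ‖x - x'‖ := by
      have h := abs_norm_sub_norm_le (x - x') (t • u)
      rw [htuu] at h
      have h2 := abs_le.1 h
      linarith [h2.1, le_of_lt he]
    have hlb2 : t - 3*R/2 ≤ ‖z - x'‖ := by
      have h := abs_norm_sub_norm_le (z - x') (t • u)
      rw [htuu] at h
      have h2 := abs_le.1 h
      linarith [h2.1, he2]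
    have hne1 : x ≠ x' := by
      intro h
      rw [h, sub_self, norm_zero] at hlb1
      linarith
    have hne2 : z ≠ x' := by
      intro h
      rw [h, sub_self, norm_zero] at hlb2
      linarith
    -- sector memberships
    have hxS : x ∈ Sector x' u δ r := by
      refine ⟨⟨hne1, lt_of_le_of_lt hd1 hd1'⟩, ?_⟩
      rw [mem_ball, dist_eq_norm]; exact hn1r
    have hzS : z ∈ Sector x' u δ r := by
      refine ⟨⟨hne2, lt_of_le_of_lt hd2 hd2'⟩, ?_⟩
      rw [mem_ball, dist_eq_norm]; exact hn2r
    have hf1 := hx'K x hxM hxS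
    have hf2 := hx'K z hzMx hzS
    have hK0 : (0:ℝ) ≤ (K:ℝ) := Nat.cast_nonneg K
    have habs : |f z - f x| ≤ (K:ℝ) * ‖z - x'‖ + (K:ℝ) * ‖x - x'‖ := by
      calc |f z - f x| ≤ |f z - f x'| + |f x' - f x| := abs_sub_le _ _ _
      _ = |f z - f x'| + |f x - f x'| := by rw [abs_sub_comm (f x')]
      _ ≤ _ := add_le_add hf2 hf1
    have a1 : (K:ℝ) * ‖z - x'‖ ≤ (K:ℝ)*(14*R/δ) := mul_le_mul_of_nonneg_left hn2K hK0
    have a2 : (K:ℝ) * ‖x - x'‖ ≤ (K:ℝ)*(13*R/δ) := mul_le_mul_of_nonneg_left hn1K hK0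
    have h27 : (K:ℝ)*(14*R/δ) + (K:ℝ)*(13*R/δ) = 27*(K:ℝ)/δ*R := by ring
    have hLR : L*R = 27*(K:ℝ)/δ*R + R := by rw [hL]; ring
    have hfin : |f z - f x| ≤ 27*(K:ℝ)/δ*R := by linarith
    rw [hLR] at hqz
    linarith

lemma piece_subset (f : EuclideanSpace ℝ (Fin d) → ℝ) (M : Set (EuclideanSpace ℝ (Fin d)))
    (u : EuclideanSpace ℝ (Fin d)) (δ r : ℝ) (K : ℕ)
    (hu : ‖u‖ = 1) (hδ0 : 0 < δ) (hr : 0 < r) :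
    Piece f M u δ r K ⊆ {x : EuclideanSpace ℝ (Fin d) | x ∈ M ∧
      (∃ u ∈ Metric.sphere (0 : EuclideanSpace ℝ (Fin d)) 1, ∃ δ > (0 : ℝ), ∃ r > (0 : ℝ),
        LipAtRel f x (M ∩ Sector x u δ r)) ∧
      ¬ LipAtRel f x M} := by
  rintro x ⟨hxM, hnl, hcond⟩
  refine ⟨hxM, ⟨u, mem_sphere_zero_iff_norm.2 hu, δ, hδ0, r, hr, ?_⟩, hnl⟩
  right
  refine ⟨(K:ℝ), Filter.eventually_map.2 ?_⟩
  filter_upwards [eventually_mem_nhdsWithin] with y hy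
  obtain ⟨⟨hyM, hyS⟩, hyx⟩ := hy
  have hpos : (0:ℝ) < ‖y - x‖ :=
    norm_pos_iff.2 (sub_ne_zero.2 (by simpa using hyx))
  exact (div_le_iff₀ hpos).2 (hcond y hyM hyS)

/-- The set of points `x ∈ M` at which `f` is Lipschitz relative to `M` intersected with some
open circular sector with vertex `x`, but not Lipschitz relative to `M`, is σ-porous. -/
theorem stmt4 (d : ℕ) (hd : 2 ≤ d) (f : EuclideanSpace ℝ (Fin d) → ℝ)
    (M : Set (EuclideanSpace ℝ (Fin d))) :
    IsSigmaPorous {x : EuclideanSpace ℝ (Fin d) | x ∈ M ∧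
      (∃ u ∈ Metric.sphere (0 : EuclideanSpace ℝ (Fin d)) 1, ∃ δ > (0 : ℝ), ∃ r > (0 : ℝ),
        LipAtRel f x (M ∩ Sector x u δ r)) ∧
      ¬ LipAtRel f x M} := by

  classical
  haveI : Nonempty (Fin d) := ⟨⟨0, by omega⟩⟩
  obtain ⟨c, hcc, hcd⟩ := TopologicalSpace.exists_countable_dense (EuclideanSpace ℝ (Fin d))
  have hcne : c.Nonempty := hcd.nonempty
  obtain ⟨e, he⟩ := hcc.exists_eq_range hcne
  set v0 : EuclideanSpace ℝ (Fin d) := EuclideanSpace.single (⟨0, by omega⟩ : Fin d) (1:ℝ) with hv0def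
  have hv0 : ‖v0‖ = 1 := by rw [hv0def, EuclideanSpace.norm_single]; norm_num
  set U : ℕ → EuclideanSpace ℝ (Fin d) := fun k => if e k = 0 then v0 else ‖e k‖⁻¹ • e k with hUdef
  have hU1 : ∀ k, ‖U k‖ = 1 := by
    intro k
    rw [hUdef]
    by_cases h : e k = 0
    · simp [h, hv0]
    · simp only [h, if_false]
      rw [norm_smul, Real.norm_eq_abs, abs_of_pos (inv_pos.2 (norm_pos_iff.2 h)),
        inv_mul_cancel₀ (norm_ne_zero_iff.2 h)]
  have hUd : ∀ u : EuclideanSpace ℝ (Fin d), ‖u‖ = 1 → ∀ τ > (0:ℝ), ∃ k, ‖U k - u‖ < τ := by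
    intro u hu τ hτ
    obtain ⟨w, hwb, hwc⟩ := (Metric.dense_iff.1 hcd) u (min (τ/3) (1/2)) (by positivity)
    rw [he] at hwc
    obtain ⟨k, hk⟩ := hwc
    rw [Metric.mem_ball, dist_eq_norm] at hwb
    have hwu3 : ‖w - u‖ < τ/3 := lt_of_lt_of_le hwb (min_le_left _ _)
    have hwu2 : ‖w - u‖ < 1/2 := lt_of_lt_of_le hwb (min_le_right _ _)
    have hnw : |‖w‖ - ‖u‖| ≤ ‖w - u‖ := abs_norm_sub_norm_le _ _
    have hw2 : (1:ℝ)/2 < ‖w‖ := by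
      have := (abs_le.1 hnw).1
      rw [hu] at this
      linarith
    have hwne : w ≠ 0 := by
      intro h; rw [h, norm_zero] at hw2; linarith
    refine ⟨k, ?_⟩
    have hUk : U k = ‖w‖⁻¹ • w := by
      rw [hUdef]
      simp only [hk]
      rw [if_neg hwne]
    rw [hUk]
    have hsplit : ‖w‖⁻¹ • w - u = (‖w‖⁻¹ - 1) • w + (w - u) := by
      rw [sub_smul, one_smul]; abel
    have h1 : ‖(‖w‖⁻¹ - 1) • w‖ = |1 - ‖w‖| := by
      rw [norm_smul, Real.norm_eq_abs,
        show |‖w‖⁻¹ - 1| * ‖w‖ = |(‖w‖⁻¹ - 1) * ‖w‖| from by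
          rw [abs_mul, abs_of_nonneg (norm_nonneg w)],
        sub_mul, inv_mul_cancel₀ (norm_ne_zero_iff.2 hwne), one_mul]
    have h2 : |1 - ‖w‖| ≤ ‖w - u‖ := by
      have := abs_norm_sub_norm_le u w
      rw [hu, norm_sub_rev] at this
      exact this
    calc ‖‖w‖⁻¹ • w - u‖ = ‖(‖w‖⁻¹ - 1) • w + (w - u)‖ := by rw [hsplit]
    _ ≤ ‖(‖w‖⁻¹ - 1) • w‖ + ‖w - u‖ := norm_add_le _ _
    _ ≤ ‖w - u‖ + ‖w - u‖ := by rw [h1]; linarith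
    _ < τ := by linarith
  set e4 : ℕ ≃ ℕ × ℕ × ℕ × ℕ := (Denumerable.eqv (ℕ × ℕ × ℕ × ℕ)).symm with he4
  refine ⟨fun i => Piece f M (U (e4 i).1) (1/((e4 i).2.1+1)) (1/((e4 i).2.2.1+1)) (e4 i).2.2.2,
    ?_, ?_⟩
  · intro i
    refine piece_porous _ _ _ _ _ _ (hU1 _) (by positivity) ?_ (by positivity)
    rw [div_le_one (by positivity)]
    have : (1:ℝ) ≤ ((e4 i).2.1 : ℝ) + 1 := by
      have : (0:ℝ) ≤ ((e4 i).2.1 : ℝ) := Nat.cast_nonneg _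
      linarith
    exact this
  · apply Set.eq_of_subset_of_subset
    · rintro x ⟨hxM, ⟨u, hus, δ, hδ, r, hr, hlip⟩, hnl⟩
      have hu1 : ‖u‖ = 1 := mem_sphere_zero_iff_norm.1 hus
      have hKρ : ∃ K : ℕ, ∃ ρ₀ > (0:ℝ), ∀ y ∈ M, y ∈ Sector x u δ r → ‖y - x‖ < ρ₀ →
          |f y - f x| ≤ K * ‖y - x‖ := by
        rcases hlip with hcl | hbd
        · rw [Metric.mem_closure_iff] at hcl
          push_neg at hcl
          obtain ⟨ρ₀, hρ₀, hsep⟩ := hcl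
          refine ⟨0, ρ₀, hρ₀, ?_⟩
          intro y hyM hyS hyn
          exfalso
          have hy : y ∈ (M ∩ Sector x u δ r) \ {x} := ⟨⟨hyM, hyS⟩, by simpa using hyS.1.1⟩
          have := hsep y hy
          rw [dist_eq_norm, norm_sub_rev] at this
          linarith
        · obtain ⟨b, hb⟩ := hbd
          rw [Filter.eventually_map, eventually_nhdsWithin_iff, Metric.eventually_nhds_iff] at hb
          obtain ⟨ρ₀, hρ₀, hb⟩ := hb
          refine ⟨⌈b⌉₊, ρ₀, hρ₀, ?_⟩
          intro y hyM hyS hyn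
          have hyx : y ≠ x := hyS.1.1
          have hpos : (0:ℝ) < ‖y - x‖ := norm_pos_iff.2 (sub_ne_zero.2 hyx)
          have hq := hb (show dist y x < ρ₀ by rwa [dist_eq_norm])
            (⟨⟨hyM, hyS⟩, by simpa using hyx⟩ : y ∈ (M ∩ Sector x u δ r) \ {x})
          have h1 : |f y - f x| ≤ b * ‖y - x‖ := (div_le_iff₀ hpos).1 hq
          have hbK : b ≤ (⌈b⌉₊:ℝ) := Nat.le_ceil b
          nlinarith
      obtain ⟨K, ρ₀, hρ₀, hcond⟩ := hKρ
      obtain ⟨k, hk⟩ := hUd u hu1 (δ/2) (by linarith)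
      obtain ⟨n, hn⟩ := exists_nat_one_div_lt (show (0:ℝ) < δ/2 by linarith)
      obtain ⟨m, hm⟩ := exists_nat_one_div_lt (lt_min hr hρ₀)
      refine mem_iUnion.2 ⟨e4.symm (k, n, m, K), ?_⟩
      rw [Equiv.apply_symm_apply]
      refine ⟨hxM, hnl, ?_⟩
      intro y hyM hyS
      obtain ⟨⟨hyx, hydir⟩, hyb⟩ := hyS
      rw [Metric.mem_ball, dist_eq_norm] at hyb
      have hyS' : y ∈ Sector x u δ r := by
        refine ⟨⟨hyx, ?_⟩, ?_⟩
        · calc ‖‖y - x‖⁻¹ • (y - x) - u‖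
              ≤ ‖‖y - x‖⁻¹ • (y - x) - U k‖ + ‖U k - u‖ :=
                norm_sub_le_norm_sub_add_norm_sub _ _ _
          _ < 1/((n:ℝ)+1) + δ/2 := add_lt_add hydir hk
          _ ≤ δ := by linarith
        · rw [Metric.mem_ball, dist_eq_norm]
          calc ‖y - x‖ < 1/((m:ℝ)+1) := hyb
          _ < min r ρ₀ := hm
          _ ≤ r := min_le_left _ _
      exact hcond y hyM hyS'
        (lt_trans hyb (lt_of_lt_of_le hm (min_le_right _ _)))
    · refine Set.iUnion_subset fun i => ?_
      exact piece_subset f M (U (e4 i).1) (1/((e4 i).2.1+1)) (1/((e4 i).2.2.1+1))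
        (e4 i).2.2.2 (hU1 _) (by positivity) (by positivity)
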